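/- arXiv:2511.13129 — 8 statements merged into one kernel-verified Lean document; each statement's English description precedes it below -/
import Mathlib

section
/- Let p, q be coprime odd integers with 0 < q < p, set ε_k = (−1)^⌊kq/p⌋, and define polynomials P_k, Q_k ∈ ℤ[X] by P_{−1} = 0, P_0 = 1, Q_{−1} = 1, Q_0 = 0 and the recursions P_k = ε_k X P_{k−1} + P_{k−2}, Q_k = ε_k X Q_{k−1} + Q_{k−2}. Then P_{p−2} = Q_{p−1} as polynomials in ℤ[X]. -/
open Polynomial Matrix

/-- `ε_k = (−1)^⌊kq/p⌋` (for `p > 0`, `Int.fdiv` is the floor of the rational `kq/p`). -/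
def eps (p q k : ℤ) : ℤ := (((-1 : ℤˣ) ^ ((k * q).fdiv p) : ℤˣ) : ℤ)

lemma eps_symm (p q : ℤ) (hq : Odd q) (hq0 : 0 < q) (hqp : q < p) (hcop : IsCoprime p q)
    (k : ℤ) (hk0 : 0 < k) (hkp : k < p) : eps p q (p - k) = eps p q k := by
  have hp0 : 0 < p := lt_trans hq0 hqp
  set d1 := (k * q) / p with hd1
  set d2 := ((p - k) * q) / p with hd2
  have hnd : ¬ p ∣ k * q := by
    intro h
    have hk' : p ∣ k := hcop.dvd_of_dvd_mul_right h
    have := Int.le_of_dvd hk0 hk'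
    omega
  have e1 := Int.mul_ediv_add_emod (k * q) p
  have e2 := Int.mul_ediv_add_emod ((p - k) * q) p
  have hr0 : 0 ≤ (k * q) % p := Int.emod_nonneg _ hp0.ne'
  have hr1 : (k * q) % p < p := Int.emod_lt_of_pos _ hp0
  have hrne : (k * q) % p ≠ 0 := fun h => hnd (Int.dvd_of_emod_eq_zero h)
  have hs0 : 0 ≤ ((p - k) * q) % p := Int.emod_nonneg _ hp0.ne'
  have hs1 : ((p - k) * q) % p < p := Int.emod_lt_of_pos _ hp0
  have hsum : (k * q) % p + ((p - k) * q) % p = p * (q - d1 - d2) := by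
    have hkey : k * q + (p - k) * q = p * q := by ring
    linear_combination e1 + e2 - hkey
  have h1 : 0 < p * (q - d1 - d2) := by rw [← hsum]; omega
  have h2 : p * (q - d1 - d2) < 2 * p := by rw [← hsum]; omega
  have hm1 : 0 < q - d1 - d2 := by
    by_contra h
    push_neg at h
    have := mul_nonpos_of_nonneg_of_nonpos hp0.le h
    omega
  have hm2 : q - d1 - d2 < 2 := by
    have : p * (q - d1 - d2) < p * 2 := by linarith
    exact lt_of_mul_lt_mul_left this hp0.le
  have hd : d1 + d2 = q - 1 := by omega
  have hqe : Even (q - 1) := by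
    obtain ⟨c, hc⟩ := hq
    exact ⟨c, by omega⟩
  unfold eps
  rw [Int.fdiv_eq_ediv_of_nonneg _ hp0.le, Int.fdiv_eq_ediv_of_nonneg _ hp0.le]
  norm_cast
  have hd2' : d2 = (q - 1) - d1 := by omega
  calc (-1 : ℤˣ) ^ d2 = (-1 : ℤˣ) ^ ((q - 1) - d1) := by rw [hd2']
    _ = (-1 : ℤˣ) ^ (q - 1) * ((-1 : ℤˣ) ^ d1)⁻¹ := zpow_sub _ _ _
    _ = ((-1 : ℤˣ) ^ d1)⁻¹ := by rw [hqe.neg_one_zpow, one_mul]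
    _ = (-1 : ℤˣ) ^ d1 := Int.units_inv_eq_self _

/-- transfer matrix -/
noncomputable def tmat (p q k : ℤ) : Matrix (Fin 2) (Fin 2) (Polynomial ℤ) :=
  !![Polynomial.C (eps p q k) * Polynomial.X, 1; 1, 0]

lemma tmat_transpose (p q k : ℤ) : (tmat p q k)ᵀ = tmat p q k := by
  rw [Matrix.eta_fin_two ((tmat p q k)ᵀ)]
  simp [tmat, Matrix.transpose_apply]

lemma prod_entries (p q : ℤ) (P Q : ℤ → Polynomial ℤ)
    (hP0 : P 0 = 1) (hP1 : P (-1) = 0)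
    (hQ0 : Q 0 = 0) (hQ1 : Q (-1) = 1)
    (hPrec : ∀ k : ℤ, P k = C (eps p q k) * X * P (k - 1) + P (k - 2))
    (hQrec : ∀ k : ℤ, Q k = C (eps p q k) * X * Q (k - 1) + Q (k - 2)) (m : ℕ) :
    ((List.range m).map (fun i : ℕ => tmat p q (i + 1))).prod
      = !![P m, P ((m : ℤ) - 1); Q m, Q ((m : ℤ) - 1)] := by
  induction m with
  | zero =>
    simp only [List.range_zero, List.map_nil, List.prod_nil, Nat.cast_zero, zero_sub]
    rw [Matrix.one_fin_two, hP0, hP1, hQ0, hQ1]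
  | succ m ih =>
    rw [List.range_succ, List.map_append, List.prod_append, ih]
    simp only [List.map_cons, List.map_nil, List.prod_cons, List.prod_nil, mul_one]
    have hP := hPrec ((m : ℤ) + 1)
    have hQ := hQrec ((m : ℤ) + 1)
    have c1 : ((m : ℤ) + 1) - 1 = (m : ℤ) := by ring
    have c2 : ((m : ℤ) + 1) - 2 = (m : ℤ) - 1 := by ring
    rw [c1, c2] at hP hQ
    rw [tmat, Matrix.mul_fin_two]
    push_cast
    rw [hP, hQ]
    congr 1 <;> ring

theorem P_eq_Q (p q : ℤ) (hp : Odd p) (hq : Odd q) (hq0 : 0 < q) (hqp : q < p)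
    (hcop : IsCoprime p q)
    (P Q : ℤ → Polynomial ℤ)
    (hP0 : P 0 = 1) (hP1 : P (-1) = 0)
    (hQ0 : Q 0 = 0) (hQ1 : Q (-1) = 1)
    (hPrec : ∀ k : ℤ, P k = C (eps p q k) * X * P (k - 1) + P (k - 2))
    (hQrec : ∀ k : ℤ, Q k = C (eps p q k) * X * Q (k - 1) + Q (k - 2)) :
    P (p - 2) = Q (p - 1) := by
  have hp3 : 3 ≤ p := by
    obtain ⟨a, ha⟩ := hp; obtain ⟨b, hb⟩ := hq; omega
  set n : ℕ := (p - 2).toNat with hn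
  have hnz : (n : ℤ) = p - 2 := Int.toNat_of_nonneg (by omega)
  have key := prod_entries p q P Q hP0 hP1 hQ0 hQ1 hPrec hQrec
  -- N : the product of tmat over indices 2,…,p-1
  set N : Matrix (Fin 2) (Fin 2) (Polynomial ℤ) :=
    ((List.range n).map (fun i : ℕ => tmat p q ((i : ℤ) + 2))).prod with hN
  -- Step 1: the (p-1)-product is tmat 1 * N
  have step1 : ((List.range (n + 1)).map (fun i : ℕ => tmat p q ((i : ℤ) + 1))).prod
      = tmat p q 1 * N := by
    rw [List.range_succ_eq_map, List.map_cons, List.prod_cons, List.map_map]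
    have h0 : ((0 : ℕ) : ℤ) + 1 = 1 := by norm_num
    rw [h0, hN]
    congr 1
    all_goals
      apply List.map_congr_left
      intro a _
      simp only [Function.comp_apply]
      congr 1
      push_cast
      ring
  -- Step 2: N is the transpose of the (p-2)-product
  have step2 : N = (((List.range n).map (fun i : ℕ => tmat p q ((i : ℤ) + 1))).prod)ᵀ := by
    rw [Matrix.transpose_list_prod, List.map_map, ← List.map_reverse]
    have hrev : (List.range n).reverse = (List.range n).map (fun i => n - 1 - i) := by
      rw [List.range_eq_range', List.reverse_range', ← List.range_eq_range']
      simp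
    rw [hrev, List.map_map, hN]
    congr 1
    apply List.map_congr_left
    intro a ha
    rw [List.mem_range] at ha
    simp only [Function.comp_apply]
    rw [tmat_transpose]
    have hcast : ((n - 1 - a : ℕ) : ℤ) + 1 = p - ((a : ℤ) + 2) := by
      have h1 : ((n - 1 - a : ℕ) : ℤ) = (n : ℤ) - 1 - (a : ℤ) := by
        push_cast [Nat.cast_sub (by omega : 1 + a ≤ n)]
        omega
      omega
    rw [hcast]
    unfold tmat
    rw [eps_symm p q hq hq0 hqp hcop ((a : ℤ) + 2) (by omega) (by omega)]
  -- combine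
  have e1 := key (n + 1)
  rw [step1, step2, key n] at e1
  have e1' := congrArg (fun M : Matrix (Fin 2) (Fin 2) (Polynomial ℤ) => M 1 0) e1
  simp only [tmat, Matrix.mul_apply, Fin.sum_univ_two, Matrix.transpose_apply,
    Matrix.cons_val', Matrix.cons_val_zero, Matrix.cons_val_one, Matrix.head_cons,
    Matrix.head_fin_const, Matrix.empty_val', Matrix.cons_val_fin_one, Matrix.of_apply] at e1'
  have hPn : P ((n : ℤ)) = Q (((n + 1 : ℕ) : ℤ)) := by
    rw [← e1']
    ring
  have hfin1 : ((n : ℤ)) = p - 2 := hnz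
  have hfin2 : (((n + 1 : ℕ)) : ℤ) = p - 1 := by push_cast; omega
  rw [hfin1, hfin2] at hPn
  exact hPn
end

section
/- Let p, q be coprime odd integers with 0 < q < p, let P_k ∈ ℤ[X] be defined by P_{−1}=0, P_0=1, P_k = ε_k X P_{k−1} + P_{k−2} with ε_k = (−1)^⌊kq/p⌋ (extended to all k ∈ ℤ), and set ι = P_{p−2}. Then, modulo the ideal generated by P_{p−1} in ℚ[X], one has P_{k+p} ≡ (−1)^k ι P_k and P_{k+2p} ≡ P_k for all k ∈ ℤ. -/
open Polynomial

lemma eps_fdiv (p q k : ℤ) : eps p q k = (((k * q).fdiv p).negOnePow : ℤ) := rfl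

lemma neg_ediv_eq {a p : ℤ} (hp : 0 < p) (hnd : ¬ p ∣ a) : (-a) / p = -(a / p) - 1 := by
  have hr0 : a % p ≠ 0 := fun h => hnd (Int.dvd_of_emod_eq_zero h)
  have hr1 : 0 ≤ a % p := Int.emod_nonneg a hp.ne'
  have hr2 : a % p < p := Int.emod_lt_of_pos a hp
  have h := (Int.ediv_emod_unique (a := -a) (b := p) (q := -(a / p) - 1)
      (r := p - a % p) hp).mpr
    ⟨by linear_combination - Int.emod_add_mul_ediv a p, by omega, by omega⟩
  exact h.1

lemma eps_add_p {p q : ℤ} (hp0 : 0 < p) (hq : Odd q) (k : ℤ) :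
    eps p q (k + p) = - eps p q k := by
  rw [eps_fdiv, eps_fdiv]
  have h1 : ((k + p) * q).fdiv p = (k * q).fdiv p + q := by
    rw [show (k + p) * q = k * q + q * p by ring, Int.fdiv_eq_ediv_of_nonneg _ hp0.le,
      Int.fdiv_eq_ediv_of_nonneg _ hp0.le, Int.add_mul_ediv_right _ _ hp0.ne']
  rw [h1, Int.negOnePow_add, Int.negOnePow_odd _ hq]
  simp

lemma eps_neg' {p q : ℤ} (hp0 : 0 < p) (hcop : IsCoprime p q) {j : ℤ}
    (h0 : 0 < j) (hj : j < p) : eps p q (-j) = - eps p q j := by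
  have hnd : ¬ p ∣ j * q := by
    intro h
    have hj' : p ∣ j := hcop.dvd_of_dvd_mul_right h
    have := Int.le_of_dvd h0 hj'
    omega
  have h2 : ((-j) * q).fdiv p = -((j * q).fdiv p) - 1 := by
    rw [show (-j) * q = -(j * q) by ring, Int.fdiv_eq_ediv_of_nonneg _ hp0.le,
      Int.fdiv_eq_ediv_of_nonneg _ hp0.le, neg_ediv_eq hp0 hnd]
  rw [eps_fdiv, eps_fdiv, h2, show -((j*q).fdiv p) - 1 = -(((j*q).fdiv p) + 1) by ring,
    Int.negOnePow_neg, Int.negOnePow_succ]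
  simp

/-- The quasi-period congruence predicate. -/
def Aprop (P : ℤ → Polynomial ℚ) (p k : ℤ) : Prop :=
  P (p - 1) ∣ (P (k + p) - C ((-1 : ℚ) ^ k) * P (p - 2) * P k)

theorem P_quasi_period (p q : ℤ) (hp : Odd p) (hq : Odd q) (hq0 : 0 < q) (hqp : q < p)
    (hcop : IsCoprime p q)
    (P : ℤ → Polynomial ℚ)
    (hP0 : P 0 = 1) (hP1 : P (-1) = 0)
    (hPrec : ∀ k : ℤ, P k = C ((eps p q k : ℚ)) * X * P (k - 1) + P (k - 2)) :
    ∀ k : ℤ,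
      P (p - 1) ∣ (P (k + p) - C ((-1 : ℚ) ^ k) * P (p - 2) * P k) ∧
      P (p - 1) ∣ (P (k + 2 * p) - P k) := by
  have hp0 : 0 < p := hq0.trans hqp
  have hp3 : 3 ≤ p := by
    obtain ⟨m, hm⟩ := hp; obtain ⟨n, hn⟩ := hq; omega
  have hne : (-1 : ℚ) ≠ 0 := by norm_num
  -- recursion in convenient forms
  have hUp : ∀ k : ℤ, P (k + 1) = C ((eps p q (k + 1) : ℚ)) * X * P k + P (k - 1) := by
    intro k
    have h := hPrec (k + 1)
    rw [show k + 1 - 1 = k by ring, show k + 1 - 2 = k - 1 by ring] at h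
    exact h
  have hDown : ∀ k : ℤ, P (k - 1) = P (k + 1) - C ((eps p q (k + 1) : ℚ)) * X * P k := by
    intro k; rw [hUp k]; ring
  -- zpow facts
  have e4 : ∀ k : ℤ, ((-1 : ℚ)) ^ (k + 1) = -((-1 : ℚ) ^ k) := by
    intro k; rw [zpow_add₀ hne, zpow_one]; ring
  have e5 : ∀ k : ℤ, ((-1 : ℚ)) ^ (k - 1) = -((-1 : ℚ) ^ k) := by
    intro k; rw [zpow_sub₀ hne, zpow_one]; field_simp
  -- reflection symmetry P(-n-2) = P n for 0 ≤ n < p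
  have hRefl : ∀ n : ℕ, (n : ℤ) < p →
      P (-(n : ℤ) - 2) = P (n : ℤ) ∧ P (-(n : ℤ) - 1) = P ((n : ℤ) - 1) := by
    intro n
    induction n with
    | zero =>
      intro _
      have h := hPrec 0
      rw [show (0 : ℤ) - 1 = -1 by ring, show (0 : ℤ) - 2 = -2 by ring, hP1] at h
      constructor
      · push_cast
        simpa using h.symm
      · push_cast
        rfl
    | succ n ih =>
      intro hlt
      push_cast at hlt ⊢
      obtain ⟨ih1, ih2⟩ := ih (by omega)
      constructor
      · -- P (-(n+1) - 2) = P (n+1)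
        have e1 := hDown (-(n : ℤ) - 2)
        rw [show -(n : ℤ) - 2 - 1 = -((n : ℤ) + 1) - 2 by ring,
          show -(n : ℤ) - 2 + 1 = -(n : ℤ) - 1 by ring] at e1
        have he : (eps p q (-(n : ℤ) - 1) : ℚ) = -(eps p q ((n : ℤ) + 1) : ℚ) := by
          rw [show -(n : ℤ) - 1 = -((n : ℤ) + 1) by ring,
            eps_neg' hp0 hcop (by positivity) (by omega)]
          push_cast; ring
        rw [he, ih1, ih2] at e1
        rw [e1, hUp (n : ℤ), map_neg]; ring
      · -- P (-(n+1) - 1) = P ((n+1) - 1)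
        rw [show -((n : ℤ) + 1) - 1 = -(n : ℤ) - 2 by ring,
          show (n : ℤ) + 1 - 1 = (n : ℤ) by ring]
        exact ih1
  -- the key induction steps
  have stepUp : ∀ k : ℤ, Aprop P p (k - 1) → Aprop P p k → Aprop P p (k + 1) := by
    intro k h1 h2
    unfold Aprop at h1 h2 ⊢
    have e1 := hUp (k + p)
    rw [show k + p + 1 = k + 1 + p by ring, show k + p - 1 = k - 1 + p by ring] at e1
    have e2 : (eps p q (k + 1 + p) : ℚ) = -(eps p q (k + 1) : ℚ) := by
      rw [eps_add_p hp0 hq (k + 1)]; push_cast; ring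
    rw [e2] at e1
    have hT : P (k + 1 + p) - C ((-1 : ℚ) ^ (k + 1)) * P (p - 2) * P (k + 1)
        = (-(C ((eps p q (k + 1) : ℚ)) * X)) *
            (P (k + p) - C ((-1 : ℚ) ^ k) * P (p - 2) * P k)
          + (P (k - 1 + p) - C ((-1 : ℚ) ^ (k - 1)) * P (p - 2) * P (k - 1)) := by
      rw [e1, hUp k, e4 k, e5 k, map_neg, map_neg]
      ring
    rw [hT]
    exact dvd_add (h2.mul_left _) h1
  have stepDown : ∀ k : ℤ, Aprop P p k → Aprop P p (k + 1) → Aprop P p (k - 1) := by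
    intro k h2 h3
    unfold Aprop at h2 h3 ⊢
    have e1 := hDown (k + p)
    rw [show k + p - 1 = k - 1 + p by ring, show k + p + 1 = k + 1 + p by ring] at e1
    have e2 : (eps p q (k + 1 + p) : ℚ) = -(eps p q (k + 1) : ℚ) := by
      rw [eps_add_p hp0 hq (k + 1)]; push_cast; ring
    rw [e2] at e1
    have hT : P (k - 1 + p) - C ((-1 : ℚ) ^ (k - 1)) * P (p - 2) * P (k - 1)
        = (C ((eps p q (k + 1) : ℚ)) * X) *
            (P (k + p) - C ((-1 : ℚ) ^ k) * P (p - 2) * P k)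
          + (P (k + 1 + p) - C ((-1 : ℚ) ^ (k + 1)) * P (p - 2) * P (k + 1)) := by
      rw [e1, hDown k, e4 k, e5 k, map_neg, map_neg]
      ring
    rw [hT]
    exact dvd_add (h2.mul_left _) h3
  -- base cases
  have hAneg1 : Aprop P p (-1) := by
    unfold Aprop
    rw [hP1, show -1 + p = p - 1 by ring]
    simp
  have hA0 : Aprop P p 0 := by
    unfold Aprop
    rw [hP0, zpow_zero, map_one, show (0 : ℤ) + p = p by ring]
    have h := hPrec p
    refine ⟨C ((eps p q p : ℚ)) * X, ?_⟩
    rw [h]; ring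
  -- all nonnegative
  have Apos : ∀ n : ℕ, Aprop P p ((n : ℤ) - 1) ∧ Aprop P p (n : ℤ) := by
    intro n
    induction n with
    | zero =>
      constructor
      · rw [show ((0 : ℕ) : ℤ) - 1 = -1 by omega]; exact hAneg1
      · rw [show ((0 : ℕ) : ℤ) = 0 by omega]; exact hA0
    | succ n ih =>
      constructor
      · rw [show ((n + 1 : ℕ) : ℤ) - 1 = (n : ℤ) by omega]; exact ih.2
      · rw [show ((n + 1 : ℕ) : ℤ) = (n : ℤ) + 1 by omega]
        exact stepUp _ ih.1 ih.2
  -- all nonpositive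
  have Aneg : ∀ n : ℕ, Aprop P p (-(n : ℤ)) ∧ Aprop P p (-(n : ℤ) + 1) := by
    intro n
    induction n with
    | zero =>
      constructor
      · rw [show -((0 : ℕ) : ℤ) = 0 by omega]; exact hA0
      · rw [show -((0 : ℕ) : ℤ) + 1 = ((1 : ℕ) : ℤ) by omega]
        exact (Apos 1).2
    | succ n ih =>
      constructor
      · rw [show -((n + 1 : ℕ) : ℤ) = (-(n : ℤ)) - 1 by omega]
        exact stepDown _ ih.1 ih.2
      · rw [show -((n + 1 : ℕ) : ℤ) + 1 = -(n : ℤ) by omega]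
        exact ih.1
  have hA : ∀ k : ℤ, Aprop P p k := by
    intro k
    obtain ⟨n, hn | hn⟩ := k.eq_nat_or_neg
    · rw [hn]; exact (Apos n).2
    · rw [hn]; exact (Aneg n).1
  -- iota squared is -1
  have hI2 : P (p - 1) ∣ (P (p - 2) * P (p - 2) + 1) := by
    have h := hA (-p)
    unfold Aprop at h
    rw [show -p + p = 0 by ring, hP0] at h
    have hPn : P (-p) = P (p - 2) := by
      have h2 := (hRefl (p - 2).toNat (by omega)).1
      rw [Int.toNat_of_nonneg (by omega : (0:ℤ) ≤ p - 2)] at h2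
      rw [show -(p - 2) - 2 = -p by ring] at h2
      exact h2
    have hodd : ((-1 : ℚ)) ^ (-p : ℤ) = -1 := by
      rw [← Int.cast_negOnePow ℚ, Int.negOnePow_neg, Int.negOnePow_odd _ hp]
      simp
    rw [hPn, hodd, map_neg, map_one] at h
    have heq : (1 : ℚ[X]) - -1 * P (p - 2) * P (p - 2) = P (p - 2) * P (p - 2) + 1 := by
      ring
    rwa [heq] at h
  intro k
  refine ⟨hA k, ?_⟩
  have h1 := hA (k + p)
  unfold Aprop at h1
  rw [show k + p + p = k + 2 * p by ring] at h1
  have h2 := hA k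
  unfold Aprop at h2
  have hc : C ((-1 : ℚ) ^ (k + p)) * C ((-1 : ℚ) ^ k) = -1 := by
    rw [← map_mul, ← zpow_add₀ hne]
    have hoddk : Odd (k + p + k) := by
      obtain ⟨m, hm⟩ := hp; exact ⟨k + m, by omega⟩
    rw [← Int.cast_negOnePow ℚ, Int.negOnePow_odd _ hoddk]
    simp
  have hT : P (k + 2 * p) - P k
      = (P (k + 2 * p) - C ((-1 : ℚ) ^ (k + p)) * P (p - 2) * P (k + p))
        + (C ((-1 : ℚ) ^ (k + p)) * P (p - 2)) *
            (P (k + p) - C ((-1 : ℚ) ^ k) * P (p - 2) * P k)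
        - (P (p - 2) * P (p - 2) + 1) * P k := by
    linear_combination (P (p - 2) * P (p - 2) * P k) * hc
  rw [hT]
  exact dvd_sub (dvd_add h1 (h2.mul_left _)) (hI2.mul_right _)
end

section
/- Let p, q be coprime odd integers with 0 < q < p and let ℓ′ be the unique odd integer with 0 < ℓ′ < 2p and qℓ′ ≡ −1 (mod 2p). With ε_k = (−1)^⌊kq/p⌋, one has ε_{ℓ′+k} = ε_k and ε_{ℓ′−k} = −ε_k for all 0 < k < p. -/
private lemma ediv_sub_one_of_not_dvd {p a : ℤ} (hp : 0 < p) (h : ¬ p ∣ a) :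
    (a - 1) / p = a / p := by
  have h0 : a % p ≠ 0 := fun hr => h (Int.dvd_of_emod_eq_zero hr)
  have h1 : 0 ≤ a % p := Int.emod_nonneg a hp.ne'
  have h2 : a % p < p := Int.emod_lt_of_pos a hp
  have key : a - 1 = (a % p - 1) + p * (a / p) := by
    have := Int.emod_add_mul_ediv a p; omega
  rw [key, Int.add_mul_ediv_left _ _ hp.ne',
    Int.ediv_eq_zero_of_lt (by omega) (by omega), zero_add]

private lemma ediv_neg_of_not_dvd {p a : ℤ} (hp : 0 < p) (h : ¬ p ∣ a) :
    (-a) / p = -(a / p) - 1 := by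
  have h0 : a % p ≠ 0 := fun hr => h (Int.dvd_of_emod_eq_zero hr)
  have h1 : 0 ≤ a % p := Int.emod_nonneg a hp.ne'
  have h2 : a % p < p := Int.emod_lt_of_pos a hp
  have key : -a = (p - a % p) + p * (-(a / p) - 1) := by
    have := Int.emod_add_mul_ediv a p; ring_nf; omega
  rw [key, Int.add_mul_ediv_left _ _ hp.ne',
    Int.ediv_eq_zero_of_lt (by omega) (by omega), zero_add]

theorem eps_shift_ell' (p q ℓ' : ℤ) (hp : Odd p) (hq : Odd q) (hq0 : 0 < q) (hqp : q < p)
    (hcop : IsCoprime p q) (hℓodd : Odd ℓ') (hℓ0 : 0 < ℓ') (hℓ2p : ℓ' < 2 * p)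
    (hℓ : 2 * p ∣ q * ℓ' + 1) :
    ∀ k : ℤ, 0 < k → k < p →
      eps p q (ℓ' + k) = eps p q k ∧ eps p q (ℓ' - k) = -eps p q k := by
  intro k hk0 hkp
  have hp0 : 0 < p := lt_trans hq0 hqp
  obtain ⟨m, hm⟩ := hℓ
  have hpk : ¬ p ∣ k * q := by
    intro hd
    have hk : p ∣ k := hcop.dvd_of_dvd_mul_right hd
    have := Int.le_of_dvd hk0 hk
    omega
  have hpk' : ¬ p ∣ -(k * q) := fun h => hpk (dvd_neg.mp h)
  have e1 : ((ℓ' + k) * q).fdiv p = (k * q).fdiv p + 2 * m := by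
    have h : (ℓ' + k) * q = (k * q - 1) + p * (2 * m) := by linear_combination hm
    rw [Int.fdiv_eq_ediv_of_nonneg _ hp0.le, Int.fdiv_eq_ediv_of_nonneg _ hp0.le, h,
      Int.add_mul_ediv_left _ _ hp0.ne', ediv_sub_one_of_not_dvd hp0 hpk]
  have e2 : ((ℓ' - k) * q).fdiv p = (-((k * q).fdiv p) - 1) + 2 * m := by
    have h : (ℓ' - k) * q = (-(k * q) - 1) + p * (2 * m) := by linear_combination hm
    rw [Int.fdiv_eq_ediv_of_nonneg _ hp0.le, Int.fdiv_eq_ediv_of_nonneg _ hp0.le, h,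
      Int.add_mul_ediv_left _ _ hp0.ne', ediv_sub_one_of_not_dvd hp0 hpk',
      ediv_neg_of_not_dvd hp0 hpk]
  have u2 : ((-1 : ℤˣ)) ^ (2 * m) = 1 := by
    rw [zpow_mul, show ((-1 : ℤˣ)) ^ (2 : ℤ) = 1 by decide, one_zpow]
  constructor
  · unfold eps
    rw [e1, zpow_add, u2, mul_one]
  · unfold eps
    rw [e2, zpow_add, u2, mul_one, sub_eq_add_neg, zpow_add, zpow_neg, zpow_neg, zpow_one,
      Int.units_inv_eq_self, Int.units_inv_eq_self]
    push_cast
    ring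
end

section
/- Let p, q be coprime odd integers with 0 < q < p, let P_k, Q_k be the standard sequences (P_{−1}=0, P_0=1, Q_{−1}=1, Q_0=0, both satisfying R_k = ε_k X R_{k−1} + R_{k−2} with ε_k = (−1)^⌊kq/p⌋), set ι = P_{p−2}, and let ℓ′ be the unique odd integer with 0 < ℓ′ < 2p and qℓ′ ≡ −1 (mod 2p). Then P_{ℓ′−1} · Q_{p−2} ≡ −ι · (P_{ℓ′} + P_{ℓ′−2}) (mod P_{p−1}) in ℚ[X]. -/
/-!
Write `a k = ε_k X`. The signs have three symmetries: `ε_{k+p} = -ε_k` (as `q` is odd),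
`ε_{ℓ'-k} = -ε_k` (as `qℓ' ≡ -1 mod 2p`) and `ε_{p-j} = ε_j` for `0 < j < p` (as `p ∤ jq`).

For two solutions `f, g` of `R_k = a_k R_{k-1} + R_{k-2}`, the reflected Casoratian
`f_{m-1-j} g_j + s f_{m-2-j} g_{j-1}` gets multiplied by `s` at each step `j → j + 1` with
`a_{m-j-1} = s a_{j+1}`. With `m = p`, `s = 1` this gives `Q_{p-1} = ι`; with `m = ℓ'`, `s = -1` and
`j = p - 1` it gives `ι P_{ℓ'-p} - P_{ℓ'-p-1} Q_{p-2} = -P_{ℓ'-2}`.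

In `V = ℚ[X]/(P_{p-1})`, antiperiodicity makes `k ↦ P_{p-1+k}` and `k ↦ -(-1)^k ι P_{k-1}` solve
the same recurrence with the same values at `0` and `1`, so they agree. At `k = ℓ' - p` and
`k = ℓ' - p + 1` (`ℓ' - p` is even) this expresses `P_{ℓ'-1}` and `P_{ℓ'}` through `P_{ℓ'-p-1}` and
`P_{ℓ'-p}`, and the identity above finishes the proof.
-/

open Polynomial

lemma Int.neg_one_sub_ediv {p : ℤ} (hp : 0 < p) (x : ℤ) : (-1 - x) / p = -(x / p) - 1 := by
  refine ((Int.ediv_emod_unique (r := p - 1 - x % p) hp).2 ⟨?_, ?_, ?_⟩).1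
  · linear_combination -Int.emod_add_mul_ediv x p
  · linarith [Int.emod_lt_of_pos x hp]
  · linarith [Int.emod_nonneg x hp.ne']

lemma Int.neg_ediv_of_not_dvd {p x : ℤ} (hp : 0 < p) (hx : ¬ p ∣ x) :
    -x / p = -(x / p) - 1 := by
  rw [Int.neg_ediv, if_neg hx, Int.sign_eq_one_of_pos hp]

section eps

variable {p q : ℤ}

lemma eps_eq_negOnePow (hp : 0 ≤ p) (k : ℤ) : eps p q k = ((k * q) / p).negOnePow := by
  rw [eps, Int.fdiv_eq_ediv_of_nonneg _ hp, Int.negOnePow_def]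

lemma eps_add_self (hp : 0 < p) (hq : Odd q) (k : ℤ) : eps p q (k + p) = -eps p q k := by
  rw [eps_eq_negOnePow hp.le, eps_eq_negOnePow hp.le, add_mul, mul_comm p q,
    Int.add_mul_ediv_right _ _ hp.ne', Int.negOnePow_add, Int.negOnePow_odd _ hq]
  simp

lemma eps_sub_left {ℓ : ℤ} (hp : 0 < p) (hℓ : 2 * p ∣ q * ℓ + 1) (k : ℤ) :
    eps p q (ℓ - k) = -eps p q k := by
  obtain ⟨s, hs⟩ := hℓ
  rw [eps_eq_negOnePow hp.le, eps_eq_negOnePow hp.le,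
    show (ℓ - k) * q = -1 - k * q + 2 * s * p by linear_combination hs,
    Int.add_mul_ediv_right _ _ hp.ne', Int.neg_one_sub_ediv hp, Int.negOnePow_add,
    Int.negOnePow_sub, Int.negOnePow_neg, Int.negOnePow_one, mul_assoc, Int.negOnePow_two_mul]
  simp

lemma eps_self_sub (hp : 0 < p) (hq : Odd q) (hcop : IsCoprime p q) {j : ℤ} (hj0 : 0 < j)
    (hjp : j < p) : eps p q (p - j) = eps p q j := by
  have hndvd : ¬ p ∣ j * q := fun h => by
    have := Int.le_of_dvd hj0 (hcop.dvd_of_dvd_mul_right h)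
    omega
  rw [eps_eq_negOnePow hp.le, eps_eq_negOnePow hp.le, show (p - j) * q = -(j * q) + q * p by ring,
    Int.add_mul_ediv_right _ _ hp.ne', Int.neg_ediv_of_not_dvd hp hndvd, Int.negOnePow_add,
    Int.negOnePow_sub, Int.negOnePow_neg, Int.negOnePow_one, Int.negOnePow_odd _ hq]
  simp

end eps

section recurrence

variable {A : Type*} [CommRing A]

def SolvesRecurrence (a f : ℤ → A) : Prop := ∀ k, f k = a k * f (k - 1) + f (k - 2)

def reflectedCasoratian (s : A) (m : ℤ) (f g : ℤ → A) (j : ℤ) : A :=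
  f (m - 1 - j) * g j + s * f (m - 2 - j) * g (j - 1)

namespace SolvesRecurrence

variable {a f g : ℤ → A}

lemma map {B : Type*} [CommRing B] (φ : A →+* B) (hf : SolvesRecurrence a f) :
    SolvesRecurrence (φ ∘ a) (φ ∘ f) := fun k => by
  simp only [Function.comp_apply, hf k, map_add, map_mul]

lemma eq_of_apply_zero_apply_one (hf : SolvesRecurrence a f) (hg : SolvesRecurrence a g)
    (h0 : f 0 = g 0) (h1 : f 1 = g 1) : f = g := by
  suffices h : ∀ k, f k = g k ∧ f (k + 1) = g (k + 1) from funext fun k => (h k).1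
  intro k
  induction k using Int.induction_on with
  | zero => exact ⟨h0, h1⟩
  | succ k ih =>
    refine ⟨ih.2, ?_⟩
    rw [hf, hg, show (k : ℤ) + 1 + 1 - 1 = k + 1 by ring, show (k : ℤ) + 1 + 1 - 2 = k by ring,
      ih.1, ih.2]
  | pred k ih =>
    refine ⟨?_, by rw [sub_add_cancel]; exact ih.1⟩
    have ef := hf (-k + 1)
    have eg := hg (-k + 1)
    rw [show -(k : ℤ) + 1 - 1 = -k by ring, show -(k : ℤ) + 1 - 2 = -k - 1 by ring] at ef eg
    linear_combination -ef + eg + ih.2 - a (-k + 1) * ih.1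

lemma reflectedCasoratian_add_one (hf : SolvesRecurrence a f) (hg : SolvesRecurrence a g)
    {s : A} (hs : s * s = 1) {m j : ℤ} (ha : a (m - (j + 1)) = s * a (j + 1)) :
    reflectedCasoratian s m f g (j + 1) = s * reflectedCasoratian s m f g j := by
  have ef := hf (m - (j + 1))
  have eg := hg (j + 1)
  rw [ha, show m - (j + 1) - 1 = m - 2 - j by ring, show m - (j + 1) - 2 = m - 1 - 2 - j by ring,
    show m - (j + 1) = m - 1 - j by ring] at ef
  rw [add_sub_cancel_right, show j + 1 - 2 = j - 1 by ring] at eg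
  unfold reflectedCasoratian
  rw [show m - 1 - (j + 1) = m - 2 - j by ring, show m - 2 - (j + 1) = m - 1 - 2 - j by ring,
    add_sub_cancel_right]
  linear_combination f (m - 2 - j) * eg - s * g j * ef
    - f (m - 2 - j) * (a (j + 1) * g j + g (j - 1)) * hs

lemma reflectedCasoratian_eq_of_palindromic (hf : SolvesRecurrence a f)
    (hg : SolvesRecurrence a g) {m : ℤ} (ha : ∀ j, 0 < j → j < m → a (m - j) = a j) {j : ℤ}
    (hj0 : 0 ≤ j) (hjm : j < m) :
    reflectedCasoratian 1 m f g j = reflectedCasoratian 1 m f g 0 := by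
  induction j, hj0 using Int.leInduction with
  | base => rfl
  | succ j hj ih =>
    rw [reflectedCasoratian_add_one hf hg (mul_one 1) (by rw [one_mul]; exact ha _ (by omega) hjm),
      one_mul, ih (by omega)]

lemma reflectedCasoratian_of_even (hf : SolvesRecurrence a f) (hg : SolvesRecurrence a g)
    {m : ℤ} (ha : ∀ j, a (m - j) = -a j) {j : ℤ} (hj : Even j) :
    reflectedCasoratian (-1) m f g j = reflectedCasoratian (-1) m f g 0 := by
  have step (i : ℤ) :
      reflectedCasoratian (-1) m f g (i + 1 + 1) = reflectedCasoratian (-1) m f g i := by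
    rw [reflectedCasoratian_add_one hf hg (by ring) (by rw [ha, neg_one_mul]),
      reflectedCasoratian_add_one hf hg (by ring) (by rw [ha, neg_one_mul]), neg_one_mul,
      neg_one_mul, neg_neg]
  obtain ⟨n, rfl⟩ := hj
  induction n using Int.induction_on with
  | zero => rw [add_zero]
  | succ n ih => rw [← ih, ← step (n + n)]; congr 1; ring
  | pred n ih => rw [← ih, ← step (-n - 1 + (-n - 1))]; congr 1; ring

lemma apply_sub_one_eq_of_palindromic (hf : SolvesRecurrence a f) (hg : SolvesRecurrence a g)
    (hf₁ : f (-1) = 0) (hf₀ : f 0 = 1) (hg₁ : g (-1) = 1) (hg₀ : g 0 = 0) {m : ℤ} (hm : 0 < m)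
    (ha : ∀ j, 0 < j → j < m → a (m - j) = a j) : g (m - 1) = f (m - 2) := by
  have h := reflectedCasoratian_eq_of_palindromic hf hg ha (j := m - 1) (by omega) (by omega)
  simp only [reflectedCasoratian, sub_self, sub_zero, zero_sub, show m - 2 - (m - 1) = -1 by ring,
    show m - 1 - 1 = m - 2 by ring, hf₀, hf₁, hg₀, hg₁] at h
  linear_combination h

lemma sub_eq_neg_of_antipalindromic (hf : SolvesRecurrence a f) (hg : SolvesRecurrence a g)
    (hg₁ : g (-1) = 1) (hg₀ : g 0 = 0) {m : ℤ} (ha : ∀ j, a (m - j) = -a j) {j : ℤ}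
    (hj : Even j) : f (m - 1 - j) * g j - f (m - 2 - j) * g (j - 1) = -f (m - 2) := by
  have h := reflectedCasoratian_of_even hf hg ha hj
  simp only [reflectedCasoratian, sub_zero, zero_sub, hg₀, hg₁] at h
  linear_combination h

lemma apply_sub_one_add_eq_of_antiperiodic (hf : SolvesRecurrence a f) {p : ℤ}
    (ha : ∀ k, a (k + p) = -a k) (hf₁ : f (-1) = 0) (hf₀ : f 0 = 1) (hp : f (p - 1) = 0)
    (k : ℤ) : f (p - 1 + k) = -((k.negOnePow : A) * f (p - 2) * f (k - 1)) := by
  have hL : SolvesRecurrence (fun k => a (p - 1 + k)) (fun k => f (p - 1 + k)) := fun k => by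
    simp only
    rw [hf, show p - 1 + k - 1 = p - 1 + (k - 1) by ring,
      show p - 1 + k - 2 = p - 1 + (k - 2) by ring]
  have hR : SolvesRecurrence (fun k => a (p - 1 + k))
      (fun k => -((k.negOnePow : A) * f (p - 2) * f (k - 1))) := fun k => by
    have e := hf (k - 1)
    rw [show k - 1 - 1 = k - 2 by ring, show k - 1 - 2 = k - 2 - 1 by ring] at e
    have s1 : (k - 1).negOnePow = -k.negOnePow := by
      rw [Int.negOnePow_sub, Int.negOnePow_one, mul_neg_one]
    have s2 : (k - 2).negOnePow = k.negOnePow := by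
      rw [Int.negOnePow_sub, Int.negOnePow_even 2 even_two, mul_one]
    simp only [show p - 1 + k = k - 1 + p by ring, show k - 1 - 1 = k - 2 by ring, ha, s1, s2]
    push_cast
    linear_combination -(k.negOnePow : A) * f (p - 2) * e
  have h1 : f (p - 1 + 1) = f (p - 2) := by
    rw [hf, add_sub_cancel_right, hp, mul_zero, zero_add, show p - 1 + 1 - 2 = p - 2 by ring]
  refine congrFun (hL.eq_of_apply_zero_apply_one hR (by simp [hp, hf₁]) ?_) k
  simp only [h1, sub_self, hf₀, Int.negOnePow_one]
  push_cast
  ring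

end SolvesRecurrence

end recurrence

open SolvesRecurrence in
theorem cusp_shape_identity_general (p q ℓ' : ℤ) (hp : Odd p) (hq : Odd q) (hq0 : 0 < q) (hqp : q < p)
    (hcop : IsCoprime p q)
    (hℓodd : Odd ℓ') (hℓ : 2 * p ∣ q * ℓ' + 1)
    (P Q : ℤ → Polynomial ℚ)
    (hP0 : P 0 = 1) (hP1 : P (-1) = 0)
    (hQ0 : Q 0 = 0) (hQ1 : Q (-1) = 1)
    (hPrec : ∀ k : ℤ, P k = C ((eps p q k : ℚ)) * X * P (k - 1) + P (k - 2))
    (hQrec : ∀ k : ℤ, Q k = C ((eps p q k : ℚ)) * X * Q (k - 1) + Q (k - 2)) :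
    P (p - 1) ∣ (P (ℓ' - 1) * Q (p - 2) + P (p - 2) * (P ℓ' + P (ℓ' - 2))) := by
  have hp0 : 0 < p := hq0.trans hqp
  set a : ℤ → ℚ[X] := fun k => C (eps p q k : ℚ) * X
  have hPa : SolvesRecurrence a P := hPrec
  have hQa : SolvesRecurrence a Q := hQrec
  have hQι : Q (p - 1) = P (p - 2) :=
    apply_sub_one_eq_of_palindromic hPa hQa hP1 hP0 hQ1 hQ0 hp0 fun j hj0 hjp => by
      simp only [a, eps_self_sub hp0 hq hcop hj0 hjp]
  have hW := sub_eq_neg_of_antipalindromic hPa hQa hQ1 hQ0 (m := ℓ')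
    (fun j => by simp [a, eps_sub_left hp0 hℓ]) (hp.sub_odd odd_one)
  rw [show ℓ' - 1 - (p - 1) = ℓ' - p by ring, show ℓ' - 2 - (p - 1) = ℓ' - p - 1 by ring,
    show p - 1 - 1 = p - 2 by ring, hQι] at hW
  rw [← Ideal.Quotient.eq_zero_iff_dvd]
  set π := Ideal.Quotient.mk (Ideal.span {P (p - 1)})
  have hshift := apply_sub_one_add_eq_of_antiperiodic (hPa.map π)
    (fun k => by simp [a, eps_add_self hp0 hq]) (by simp [hP1]) (by simp [hP0])
    (Ideal.Quotient.mk_singleton_self _)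
  have hm : Even (ℓ' - p) := hℓodd.sub_odd hp
  have h1 := hshift (ℓ' - p)
  have h2 := hshift (ℓ' - p + 1)
  simp only [Function.comp_apply, show p - 1 + (ℓ' - p) = ℓ' - 1 by ring,
    show p - 1 + (ℓ' - p + 1) = ℓ' by ring, add_sub_cancel_right, Int.negOnePow_even _ hm,
    Int.negOnePow_odd _ hm.add_one, Units.val_one, Units.val_neg, Int.cast_one, Int.cast_neg]
    at h1 h2
  have hWπ := congrArg π hW
  simp only [map_add, map_sub, map_mul, map_neg] at hWπ ⊢
  linear_combination π (Q (p - 2)) * h1 + π (P (p - 2)) * h2 + π (P (p - 2)) * hWπ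

theorem cusp_shape_identity (p q ℓ' : ℤ) (hp : Odd p) (hq : Odd q) (hq0 : 0 < q) (hqp : q < p)
    (hcop : IsCoprime p q)
    (hℓodd : Odd ℓ') (hℓ0 : 0 < ℓ') (hℓ2p : ℓ' < 2 * p) (hℓ : 2 * p ∣ q * ℓ' + 1)
    (P Q : ℤ → Polynomial ℚ)
    (hP0 : P 0 = 1) (hP1 : P (-1) = 0)
    (hQ0 : Q 0 = 0) (hQ1 : Q (-1) = 1)
    (hPrec : ∀ k : ℤ, P k = C ((eps p q k : ℚ)) * X * P (k - 1) + P (k - 2))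
    (hQrec : ∀ k : ℤ, Q k = C ((eps p q k : ℚ)) * X * Q (k - 1) + Q (k - 2)) :
    P (p - 1) ∣ (P (ℓ' - 1) * Q (p - 2) + P (p - 2) * (P ℓ' + P (ℓ' - 2))) :=
  cusp_shape_identity_general p q ℓ' hp hq hq0 hqp hcop hℓodd hℓ P Q hP0 hP1 hQ0 hQ1 hPrec hQrec
end

section
/- Let p, q be coprime odd integers with 1 < q < p and let ℓ be the unique odd integer with 0 < ℓ < p and qℓ ≡ ±1 (mod p), with ε_k = (−1)^⌊kq/p⌋. Then ε_{ℓ+1} + ε_{ℓ−1} = 0. (This is the key parity fact implying that the sum over the parabolic character variety of the inverses of adjoint Reidemeister torsions vanishes.) -/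
lemma fdiv_eq_of_eq_add {p a m r : ℤ} (hp : 0 < p) (h : a = p * m + r)
    (hr0 : 0 ≤ r) (hrp : r < p) : a.fdiv p = m := by
  rw [Int.fdiv_eq_ediv_of_nonneg _ hp.le, h]
  have : p * m + r = r + m * p := by ring
  rw [this, Int.add_mul_ediv_right _ _ hp.ne', Int.ediv_eq_zero_of_lt hr0 hrp, zero_add]

theorem eps_ell_parity (p q ℓ : ℤ) (hp : Odd p) (hq : Odd q) (hq1 : 1 < q) (hqp : q < p)
    (hcop : IsCoprime p q) (hℓodd : Odd ℓ) (hℓ0 : 0 < ℓ) (hℓp : ℓ < p)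
    (hℓ : p ∣ q * ℓ - 1 ∨ p ∣ q * ℓ + 1) :
    eps p q (ℓ + 1) + eps p q (ℓ - 1) = 0 := by
  have hp0 : (0:ℤ) < p := lt_trans (lt_trans one_pos hq1) hqp
  have hq1p : q + 1 < p := by
    rcases lt_or_eq_of_le (by linarith : q + 1 ≤ p) with h | h
    · exact h
    · exfalso
      obtain ⟨a, ha⟩ := hp
      obtain ⟨b, hb⟩ := hq
      omega
  have key : ∃ m : ℤ, ((ℓ + 1) * q).fdiv p = m ∧ ((ℓ - 1) * q).fdiv p = m - 1 := by
    rcases hℓ with ⟨m, hm⟩ | ⟨m, hm⟩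
    · refine ⟨m, fdiv_eq_of_eq_add hp0 (r := q + 1) (by linarith) (by linarith) (by linarith),
        fdiv_eq_of_eq_add hp0 (r := p + 1 - q) (by linarith) (by linarith) (by linarith)⟩
    · refine ⟨m, fdiv_eq_of_eq_add hp0 (r := q - 1) (by linarith) (by linarith) (by linarith),
        fdiv_eq_of_eq_add hp0 (r := p - 1 - q) (by linarith) (by linarith) (by linarith)⟩
  obtain ⟨m, h1, h2⟩ := key
  unfold eps
  rw [h1, h2]
  have : (-1 : ℤˣ) ^ (m - 1) = -((-1 : ℤˣ) ^ m) := by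
    rw [zpow_sub, zpow_one]
    simp
  rw [this]
  simp
end

section
/- In the ring ℤ[i][t, t^{−1}], setting X = i(t + t^{−1}), for every integer k ≥ 0 one has the matrix identity [[X,1],[1,0]]^k · (t − t^{−1}) = i^k · [[t^{k+1} − t^{−k−1}, −i(t^k − t^{−k})], [−i(t^k − t^{−k}), −(t^{k−1} − t^{−k+1})]]. -/
open LaurentPolynomial

/-- The element `i ∈ ℤ[i] ⊆ ℤ[i][t,t⁻¹]`. -/
noncomputable def Li : LaurentPolynomial GaussianInt := LaurentPolynomial.C ⟨0, 1⟩

/-- `t^k` in `ℤ[i][t,t⁻¹]`. -/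
noncomputable def Lt (k : ℤ) : LaurentPolynomial GaussianInt := LaurentPolynomial.T k

lemma Lt_mul (a b : ℤ) : Lt a * Lt b = Lt (a + b) := by
  rw [Lt, Lt, Lt, ← LaurentPolynomial.T_add]

lemma Lt_mul' (a b c : ℤ) (h : a + b = c) : Lt a * Lt b = Lt c := by rw [Lt_mul, h]

lemma Lt_congr (a b : ℤ) (h : a = b) : Lt a = Lt b := by rw [h]

lemma Lt_zero : Lt 0 = 1 := by simp [Lt]

lemma Li_sq : Li * Li = -1 := by
  have : (⟨0,1⟩ : GaussianInt) * ⟨0,1⟩ = -1 := by decide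
  rw [Li, ← map_mul, this, map_neg, map_one]

/-- With `X = i(t + t⁻¹)`, for every `k ≥ 0`:
`[[X,1],[1,0]]^k (t − t⁻¹) = i^k [[t^{k+1} − t^{−k−1}, −i(t^k − t^{−k})],
[−i(t^k − t^{−k}), −(t^{k−1} − t^{−k+1})]]`. -/
theorem matrix_power_formula (k : ℕ) :
    (Lt 1 - Lt (-1)) • ((!![Li * (Lt 1 + Lt (-1)), 1; 1, 0]) ^ k) =
      Li ^ k •
        !![Lt ((k : ℤ) + 1) - Lt (-((k : ℤ) + 1)), -Li * (Lt (k : ℤ) - Lt (-(k : ℤ)));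
           -Li * (Lt (k : ℤ) - Lt (-(k : ℤ))), -(Lt ((k : ℤ) - 1) - Lt (-((k : ℤ) - 1)))] := by
  induction k with
  | zero =>
      apply Matrix.ext
      intro i j
      fin_cases i <;> fin_cases j <;>
        simp [Lt_zero, Matrix.smul_apply, Matrix.one_apply]
  | succ k ih =>
      have h : ((!![Li * (Lt 1 + Lt (-1)), 1; 1, 0]) ^ (k+1)) =
          ((!![Li * (Lt 1 + Lt (-1)), 1; 1, 0]) ^ k) * !![Li * (Lt 1 + Lt (-1)), 1; 1, 0] :=
        pow_succ _ _
      rw [h, ← Matrix.smul_mul, ih, Matrix.smul_mul, pow_succ, mul_smul]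
      congr 1
      apply Matrix.ext
      intro i j
      fin_cases i <;> fin_cases j <;>
        simp [Matrix.mul_apply, Fin.sum_univ_two]
      · linear_combination (norm := ring_nf) Li * Lt_mul' ((k:ℤ)+1) 1 ((k:ℤ)+1+1) (by ring)
          + Li * Lt_mul' ((k:ℤ)+1) (-1) (k:ℤ) (by ring)
          - Li * Lt_mul' (-((k:ℤ)+1)) 1 (-(k:ℤ)) (by ring)
          - Li * Lt_mul' (-((k:ℤ)+1)) (-1) (-((k:ℤ)+1+1)) (by ring)
          + Li * (Lt 1 + Lt (-1)) * Lt_congr (-((k:ℤ)+1)) (-1-(k:ℤ)) (by ring)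
          + Li * Lt_congr (-1+(-1-(k:ℤ))) (-((k:ℤ)+1+1)) (by ring)
      · linear_combination (norm := ring_nf) (Lt ((k:ℤ)+1) - Lt (-((k:ℤ)+1))) * Li_sq
          + (1+Li^2) * Lt_congr (-((k:ℤ)+1)) (-1-(k:ℤ)) (by ring)
      · linear_combination (norm := ring_nf) (-Li*Li) * (Lt_mul' (k:ℤ) 1 ((k:ℤ)+1) (by ring)
            + Lt_mul' (k:ℤ) (-1) ((k:ℤ)-1) (by ring)
            - Lt_mul' (-(k:ℤ)) 1 (-((k:ℤ)-1)) (by ring)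
            - Lt_mul' (-(k:ℤ)) (-1) (-((k:ℤ)+1)) (by ring))
          + (Lt (-((k:ℤ)-1)) - Lt ((k:ℤ)-1)) * Li_sq
          + Li^2 * Lt_congr (-((k:ℤ)+1)) (-1-(k:ℤ)) (by ring)
          + Lt_congr (1-(k:ℤ)) (-((k:ℤ)-1)) (by ring)
      · linear_combination (norm := ring_nf) Li * Lt_congr (k:ℤ) ((k:ℤ)+1-1) (by ring)
          - Li * Lt_congr (-(k:ℤ)) (-((k:ℤ)+1-1)) (by ring)
end

section
/- Let c, d be coprime positive integers, set p = c + dn for a positive integer n, and define ε_k = (−1)^⌊dk/p⌋ for 1 ≤ k ≤ p−1. Set k_r = rn + ⌊rc/d⌋ for 0 ≤ r ≤ d−1 and k_d = p−1. Then for every r with 1 ≤ r ≤ d and every k with k_{r−1} < k ≤ k_r, one has ε_k = (−1)^{r−1}. In particular the ε-sequence consists of d alternating constant blocks whose lengths are n + α_r, where α_r = ⌊rc/d⌋ − ⌊(r−1)c/d⌋ for r < d and α_d = ⌊dc/d⌋ − ⌊(d−1)c/d⌋ − 1. -/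
/-- The block endpoints `k_r = rn + ⌊rc/d⌋` for `0 ≤ r < d`, with `k_d = p − 1`. -/
def blockEnd (c d n p r : ℤ) : ℤ := if r = d then p - 1 else r * n + (r * c).fdiv d

/-- `α_r = ⌊rc/d⌋ − ⌊(r−1)c/d⌋` for `r < d` and `α_d = ⌊dc/d⌋ − ⌊(d−1)c/d⌋ − 1`. -/
def alph (c d r : ℤ) : ℤ :=
  if r = d then (r * c).fdiv d - ((r - 1) * c).fdiv d - 1
  else (r * c).fdiv d - ((r - 1) * c).fdiv d

theorem eps_blocks (c d n p : ℤ) (hc : 0 < c) (hd : 0 < d) (hn : 0 < n)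
    (hcop : IsCoprime c d) (hp : p = c + d * n) :
    (∀ r k : ℤ, 1 ≤ r → r ≤ d → blockEnd c d n p (r - 1) < k → k ≤ blockEnd c d n p r →
        eps p d k = (((-1 : ℤˣ) ^ (r - 1) : ℤˣ) : ℤ)) ∧
    (∀ r : ℤ, 1 ≤ r → r ≤ d →
        blockEnd c d n p r - blockEnd c d n p (r - 1) = n + alph c d r) := by
  have hp0 : 0 < p := by nlinarith
  constructor
  · intro r k hr1 hrd hk1 hk2
    have hr1d : r - 1 ≠ d := by omega
    rw [blockEnd, if_neg hr1d, Int.fdiv_eq_ediv_of_nonneg _ hd.le] at hk1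
    -- facts about ((r-1)*c) % d
    have hA : d * (((r - 1) * c) / d) + ((r - 1) * c) % d = (r - 1) * c :=
      Int.mul_ediv_add_emod _ _
    have hA1 : 0 ≤ ((r - 1) * c) % d := Int.emod_nonneg _ hd.ne'
    have hA2 : ((r - 1) * c) % d < d := Int.emod_lt_of_pos _ hd
    have hlow : (r - 1) * p ≤ k * d := by
      have hk : (r - 1) * n + ((r - 1) * c) / d + 1 ≤ k := by omega
      have := mul_le_mul_of_nonneg_right hk hd.le
      nlinarith
    have hhigh : k * d < r * p := by
      by_cases hreq : r = d
      · rw [blockEnd, if_pos (by rw [hreq])] at hk2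
        have := mul_le_mul_of_nonneg_right hk2 hd.le
        nlinarith
      · rw [blockEnd, if_neg hreq, Int.fdiv_eq_ediv_of_nonneg _ hd.le] at hk2
        have hB : d * ((r * c) / d) + (r * c) % d = r * c := Int.mul_ediv_add_emod _ _
        have hB1 : 0 ≤ (r * c) % d := Int.emod_nonneg _ hd.ne'
        have hB2 : (r * c) % d ≠ 0 := by
          intro h
          have hdvd : d ∣ r * c := Int.dvd_of_emod_eq_zero h
          have : d ∣ r := (hcop.symm).dvd_of_dvd_mul_right hdvd
          have := Int.le_of_dvd (by omega) this
          omega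
        have h3 : (r * n + r * c / d) * d = r * (d * n) + d * (r * c / d) := by ring
        have h4 := mul_le_mul_of_nonneg_right hk2 hd.le
        have h5 : r * p = r * c + r * (d * n) := by rw [hp]; ring
        have hB2' : 1 ≤ r * c % d := by omega
        linarith
    have key : (k * d).fdiv p = r - 1 := by
      rw [Int.fdiv_eq_ediv_of_nonneg _ hp0.le]
      have h1 : r - 1 ≤ k * d / p := (Int.le_ediv_iff_mul_le hp0).mpr hlow
      have h2 : k * d / p < r := (Int.ediv_lt_iff_lt_mul hp0).mpr hhigh
      omega
    rw [eps, key]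
  · intro r hr1 hrd
    have hr1d : r - 1 ≠ d := by omega
    by_cases hreq : r = d
    · subst hreq
      rw [blockEnd, if_pos rfl, blockEnd, if_neg hr1d, alph, if_pos rfl,
        Int.mul_fdiv_cancel_left _ hd.ne']
      linarith
    · rw [blockEnd, if_neg hreq, blockEnd, if_neg hr1d, alph, if_neg hreq]
      ring
end

section
/- Let p, q be coprime odd integers with 0 < q < p and let P_k, Q_k be the standard sequences. Let S = Σ_{k=1}^{(p−1)/2} ε_{2k−1} (P_{2k−1} + P_{2k−3}) and Ω⁺ = Σ_{k=1}^{(p−1)/2} (−ε_{2k}) P_{2k−1}², and define Ω = Σ_{k=0}^{p−2} (−1)^k ε_{k+1} P_k². Then Ω ≡ 2 Ω⁺ (mod P_{p−1}) in ℚ[X], i.e., the odd-index and even-index parts of Ω contribute equally modulo P_{p−1}. -/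
open Polynomial

private lemma sum_Icc_int' {M : Type*} [AddCommMonoid M] (f : ℤ → M) (n : ℕ) :
    ∑ k ∈ Finset.Icc (0:ℤ) ((n:ℤ)-1), f k = ∑ i ∈ Finset.range n, f i := by
  apply Finset.sum_bij' (fun (k : ℤ) _ => k.toNat) (fun (i : ℕ) _ => (i : ℤ))
  · intro a ha; simp only [Finset.mem_Icc] at ha; simp only [Finset.mem_range]; omega
  · intro a ha; simp only [Finset.mem_range] at ha; simp only [Finset.mem_Icc]; omega
  · intro a ha; simp only [Finset.mem_Icc] at ha; omega
  · intro a _; omega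
  · intro a ha; simp only [Finset.mem_Icc] at ha; congr 1; omega

private lemma sum_Icc_one' {M : Type*} [AddCommMonoid M] (f : ℤ → M) (n : ℕ) :
    ∑ k ∈ Finset.Icc (1:ℤ) (n:ℤ), f k = ∑ i ∈ Finset.range n, f ((i:ℤ)+1) := by
  apply Finset.sum_bij' (fun (k : ℤ) _ => (k-1).toNat) (fun (i : ℕ) _ => (i : ℤ)+1)
  · intro a ha; simp only [Finset.mem_Icc] at ha; simp only [Finset.mem_range]; omega
  · intro a ha; simp only [Finset.mem_range] at ha; simp only [Finset.mem_Icc]; omega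
  · intro a ha; simp only [Finset.mem_Icc] at ha; omega
  · intro a _; omega
  · intro a ha; simp only [Finset.mem_Icc] at ha; congr 1; omega

private lemma sum_range_two_mul' {M : Type*} [AddCommMonoid M] (f : ℕ → M) (n : ℕ) :
    ∑ k ∈ Finset.range (2*n), f k = ∑ j ∈ Finset.range n, (f (2*j) + f (2*j+1)) := by
  induction n with
  | zero => simp
  | succ n ih =>
    rw [show 2*(n+1) = (2*n)+1+1 by ring, Finset.sum_range_succ, Finset.sum_range_succ,
      ih, Finset.sum_range_succ, add_assoc]

private lemma eps_mirror {p q : ℤ} (hq : Odd q) (hcop : IsCoprime p q) {k : ℤ}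
    (h1 : 0 < k) (h2 : k < p) : eps p q (p - k) = eps p q k := by
  have hp0 : 0 < p := h1.trans h2
  have hnd : ¬ p ∣ k * q := by
    intro h
    have hk : p ∣ k := hcop.dvd_of_dvd_mul_right h
    have := Int.le_of_dvd h1 hk
    omega
  have hne : (k*q) % p ≠ 0 := fun hr => hnd (Int.dvd_of_emod_eq_zero hr)
  have h1' : 0 ≤ (k*q) % p := Int.emod_nonneg _ hp0.ne'
  have h2' : (k*q) % p < p := Int.emod_lt_of_pos _ hp0
  have hsplit := Int.emod_add_mul_ediv (k*q) p
  have hneg : (-(k*q)) / p = -((k*q)/p) - 1 := by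
    have ha : -(k*q) = (p - (k*q) % p) + p * (-((k*q)/p) - 1) := by linarith
    rw [ha, Int.add_mul_ediv_left _ _ hp0.ne',
      Int.ediv_eq_zero_of_lt (by omega) (by omega)]
    ring
  have he : ((p - k) * q).fdiv p = q - 1 - (k*q).fdiv p := by
    rw [Int.fdiv_eq_ediv_of_nonneg _ hp0.le, Int.fdiv_eq_ediv_of_nonneg _ hp0.le,
      show (p - k) * q = (-(k*q)) + p * q by ring,
      Int.add_mul_ediv_left _ _ hp0.ne', hneg]
    ring
  unfold eps
  rw [he]
  obtain ⟨t, ht⟩ := hq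
  congr 1
  rw [show q - 1 - (k*q).fdiv p = 2*t - (k*q).fdiv p by omega, zpow_sub,
    Even.neg_one_zpow ⟨t, by ring⟩, one_mul, ← inv_zpow, inv_neg_one]

private lemma keyB {p q : ℤ} (hq : Odd q) (hcop : IsCoprime p q)
    (P : ℤ → Polynomial ℚ) (hP0 : P 0 = 1) (hP1 : P (-1) = 0)
    (hPrec : ∀ k : ℤ, P k = C ((eps p q k : ℚ)) * X * P (k - 1) + P (k - 2)) :
    ∀ k : ℕ, (k : ℤ) ≤ p →
      P (p - 1) ∣ (P (p - 1 - k) - (-1)^(k+1) * P (p - 2) * P ((k:ℤ) - 1)) := by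
  intro k
  induction k using Nat.strong_induction_on with
  | _ k ih =>
    obtain _ | _ | k := k
    · intro _
      simp [hP1]
    · intro _
      rw [show ((1:ℕ):ℤ) = 1 by norm_num]
      rw [show p - 1 - 1 = p - 2 by ring, show (1:ℤ) - 1 = 0 by ring, hP0]
      simp
    · intro hk2
      have hkp : (k:ℤ) + 2 ≤ p := by push_cast at hk2; omega
      have ih1 := ih k (by omega) (by omega)
      have ih2 := ih (k+1) (by omega) (by push_cast; omega)
      rw [show ((k+1:ℕ):ℤ) = (k:ℤ)+1 by push_cast; ring,
        show p - 1 - ((k:ℤ)+1) = p - 1 - (k:ℤ) - 1 by ring,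
        show (k:ℤ)+1-1 = (k:ℤ) by ring] at ih2
      rw [show ((k+1+1:ℕ):ℤ) = (k:ℤ)+2 by push_cast; ring,
        show p - 1 - ((k:ℤ)+2) = p - 1 - (k:ℤ) - 2 by ring,
        show (k:ℤ)+2-1 = (k:ℤ)+1 by ring]
      have hε : eps p q (p - 1 - (k:ℤ)) = eps p q ((k:ℤ)+1) := by
        rw [show p - 1 - (k:ℤ) = p - ((k:ℤ)+1) by ring]
        exact eps_mirror hq hcop (by omega) (by omega)
      have hr1 := hPrec (p - 1 - (k:ℤ))
      rw [hε] at hr1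
      have hk1 := hPrec ((k:ℤ)+1)
      rw [show (k:ℤ)+1-1 = (k:ℤ) by ring, show (k:ℤ)+1-2 = (k:ℤ)-1 by ring] at hk1
      obtain ⟨a, ha⟩ := ih1
      obtain ⟨b, hb⟩ := ih2
      refine ⟨a - C ((eps p q ((k:ℤ)+1) : ℚ)) * X * b, ?_⟩
      linear_combination ha - (C ((eps p q ((k:ℤ)+1) : ℚ)) * X) * hb - hr1
        - (-1 : Polynomial ℚ)^(k+3) * P (p-2) * hk1

/-- `Ω ≡ 2 Ω⁺ (mod P_{p−1})`, where `Ω = Σ_{k=0}^{p−2} (−1)^k ε_{k+1} P_k²` and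
`Ω⁺ = Σ_{k=1}^{(p−1)/2} (−ε_{2k}) P_{2k−1}²`. -/
theorem omega_eq_two_omega_plus (p q : ℤ) (hp : Odd p) (hq : Odd q) (hq0 : 0 < q) (hqp : q < p)
    (hcop : IsCoprime p q)
    (P : ℤ → Polynomial ℚ)
    (hP0 : P 0 = 1) (hP1 : P (-1) = 0)
    (hPrec : ∀ k : ℤ, P k = C ((eps p q k : ℚ)) * X * P (k - 1) + P (k - 2)) :
    P (p - 1) ∣
      ((∑ k ∈ Finset.Icc (0 : ℤ) (p - 2),
          C ((-1 : ℚ) ^ k * (eps p q (k + 1) : ℚ)) * (P k) ^ 2) -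
        2 * ∑ k ∈ Finset.Icc (1 : ℤ) ((p - 1) / 2),
          C (-(eps p q (2 * k) : ℚ)) * (P (2 * k - 1)) ^ 2) := by
  have hp0 : 0 < p := hq0.trans hqp
  obtain ⟨t, ht⟩ := id hp
  obtain ⟨s, hs⟩ := id hq
  have hp3 : 3 ≤ p := by omega
  set m : ℤ := (p-1)/2 with hmdef
  have hm : p = 2*m + 1 := by omega
  set mn : ℕ := m.toNat with hmndef
  have hmn : (mn:ℤ) = m := by omega
  have keyC : P (p-1) ∣ (P (p-2) * P (p-2) + 1) := by
    have h := keyB hq hcop P hP0 hP1 hPrec (2*mn) (by omega)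
    rw [show ((2*mn:ℕ):ℤ) = p - 1 by omega] at h
    rw [show p - 1 - (p-1) = (0:ℤ) by ring, hP0,
      show p - 1 - 1 = p - 2 by ring] at h
    rw [Odd.neg_one_pow ⟨mn, rfl⟩] at h
    have e : (1:Polynomial ℚ) - (-1) * P (p-2) * P (p-2) = P (p-2) * P (p-2) + 1 := by ring
    rwa [e] at h
  -- rewrite the sums
  rw [show p - 2 = ((2*mn:ℕ):ℤ) - 1 by omega]
  rw [sum_Icc_int' (fun k => C ((-1:ℚ)^k * (eps p q (k+1):ℚ)) * P k ^ 2) (2*mn)]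
  rw [show m = ((mn:ℕ):ℤ) from hmn.symm]
  rw [sum_Icc_one' (fun k => C (-(eps p q (2*k):ℚ)) * P (2*k-1)^2) mn]
  rw [sum_range_two_mul' (fun i => C ((-1:ℚ)^((i:ℤ)) * (eps p q ((i:ℤ)+1):ℚ)) * P (i:ℤ) ^ 2) mn]
  rw [Finset.sum_add_distrib]
  have hodd : (∑ j ∈ Finset.range mn,
      C ((-1:ℚ) ^ ((2*j+1:ℕ):ℤ) * ((eps p q (((2*j+1:ℕ):ℤ) + 1)):ℚ)) * P ((2*j+1:ℕ):ℤ) ^ 2)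
      = ∑ i ∈ Finset.range mn, C (-((eps p q (2 * ((i:ℤ) + 1))):ℚ)) * P (2 * ((i:ℤ) + 1) - 1) ^ 2 := by
    apply Finset.sum_congr rfl
    intro j hj
    rw [show ((2*j+1:ℕ):ℤ) = 2*((j:ℤ)+1)-1 by push_cast; ring,
      Odd.neg_one_zpow ⟨(j:ℤ), by ring⟩,
      show 2*((j:ℤ)+1)-1+1 = 2*((j:ℤ)+1) by ring, neg_one_mul]
  rw [hodd]
  rw [show ∀ a b : Polynomial ℚ, a + b - 2*b = a - b from fun a b => by ring]
  have hrefl : (∑ j ∈ Finset.range mn, C (-((eps p q (2*(m-(j:ℤ)))):ℚ)) * P (2*(m-(j:ℤ))-1)^2)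
      = ∑ i ∈ Finset.range mn, C (-((eps p q (2 * ((i:ℤ) + 1))):ℚ)) * P (2 * ((i:ℤ) + 1) - 1) ^ 2 := by
    rw [← Finset.sum_range_reflect
      (fun i => C (-((eps p q (2 * ((i:ℤ) + 1))):ℚ)) * P (2 * ((i:ℤ) + 1) - 1) ^ 2) mn]
    apply Finset.sum_congr rfl
    intro j hj
    simp only [Finset.mem_range] at hj
    rw [show ((mn - 1 - j : ℕ):ℤ) + 1 = m - (j:ℤ) by omega]
  rw [← hrefl, ← Finset.sum_sub_distrib]
  apply Finset.dvd_sum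
  intro j hj
  simp only [Finset.mem_range] at hj
  rw [show ((2*j:ℕ):ℤ) = 2*(j:ℤ) by push_cast; ring]
  rw [Even.neg_one_zpow ⟨(j:ℤ), by ring⟩, one_mul]
  have hε : eps p q (2*(m-(j:ℤ))) = eps p q (2*(j:ℤ)+1) := by
    rw [show 2*(m-(j:ℤ)) = p - (2*(j:ℤ)+1) by omega]
    exact eps_mirror hq hcop (by omega) (by omega)
  rw [hε, map_neg]
  have h := keyB hq hcop P hP0 hP1 hPrec (2*(mn-j)) (by omega)
  rw [show ((2*(mn-j):ℕ):ℤ) = p - 1 - 2*(j:ℤ) by omega] at h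
  rw [show p - 1 - (p - 1 - 2*(j:ℤ)) = 2*(j:ℤ) by ring,
    show p - 1 - 2*(j:ℤ) - 1 = 2*(m-(j:ℤ))-1 by omega] at h
  rw [Odd.neg_one_pow ⟨mn-j, rfl⟩] at h
  obtain ⟨u, hu⟩ := h
  obtain ⟨v, hv⟩ := keyC
  refine ⟨C ((eps p q (2*(j:ℤ)+1):ℚ)) * (u*(P (2*(j:ℤ)) - P (p-2) * P (2*(m-(j:ℤ))-1))
    + (P (2*(m-(j:ℤ))-1))^2 * v), ?_⟩
  linear_combination (C ((eps p q (2*(j:ℤ)+1):ℚ)) * (P (2*(j:ℤ)) - P (p-2)*P (2*(m-(j:ℤ))-1))) * hu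
    + C ((eps p q (2*(j:ℤ)+1):ℚ)) * (P (2*(m-(j:ℤ))-1))^2 * hv
end
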